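/- arXiv:0803.3213 — 3 statements merged into one kernel-verified Lean document; each statement's English description precedes it below -/
import Mathlib

section
/- Let L be a Γ-graded finite-dimensional complex Lie algebra of operators on a finite-dimensional space, graded by a finite abelian group Γ. If every homogeneous element a (i.e., a ∈ L_γ for some γ) has ad a nilpotent on L, then L is solvable. -/
/-! The grading forces `L` to be nilpotent, hence solvable; the proof follows Engel's theorem.
Call a subalgebra `H` Engelian on the homogeneous elements if every `H`-module on which its
homogeneous elements act nilpotently is a nilpotent module, and take a homogeneous such `H` that
is maximal. If `H ≠ L`, then `H` acts nilpotently on `L ⧸ H`, so its normalizer is strictly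
larger. The normalizer of a homogeneous subalgebra is homogeneous, hence contains a homogeneous
`a ∉ H`, and `H + ℂ a` is again Engelian on the homogeneous elements: `H` is an ideal of it and
`a` acts nilpotently. -/

attribute [local instance 100] LieRing.ofAssociativeRing

open LieModule

universe u v

namespace LieSubalgebra

variable {R : Type u} {L : Type v} [CommRing R] [LieRing L] [LieAlgebra R L]

def IsEngelianOn (H : LieSubalgebra R L) (S : Set L) : Prop :=
  ∀ (M : Type v) [AddCommGroup M] [Module R M] [LieRingModule H M] [LieModule R H M],
    (∀ x : H, (x : L) ∈ S → IsNilpotent (toEnd R H M x)) → LieModule.IsNilpotent H M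

attribute [local instance] LieSubalgebra.subsingleton_bot in
theorem isEngelianOn_bot (S : Set L) : (⊥ : LieSubalgebra R L).IsEngelianOn S := by
  intro M _ _ _ _ _
  use 1
  simp

theorem IsEngelianOn.of_toSubmodule_eq_span_singleton_sup {H H' : LieSubalgebra R L}
    {S : Set L} (hH : H.IsEngelianOn S) {x : L} (hxN : x ∈ H.normalizer) (hxS : x ∈ S)
    (hH' : H'.toSubmodule = (R ∙ x) ⊔ H.toSubmodule) : H'.IsEngelianOn S := by
  intro M _ _ _ _ hM
  have hxH' : x ∈ H' := by
    rw [← mem_toSubmodule, hH']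
    exact Submodule.mem_sup_left (Submodule.mem_span_singleton_self x)
  have hHH' : H ≤ H' := by
    rw [← toSubmodule_le_toSubmodule, hH']
    exact le_sup_right
  have hH'N : H' ≤ H.normalizer := by
    rw [← toSubmodule_le_toSubmodule, hH']
    exact sup_le ((Submodule.span_singleton_le_iff_mem _ _).mpr hxN) H.le_normalizer
  obtain ⟨I, hI⟩ := exists_nested_lieIdeal_ofLe_normalizer hHH' hH'N
  have hxI : R ∙ (⟨x, hxH'⟩ : H') ⊔ I.toSubmodule = ⊤ := by
    rw [← LieIdeal.toLieSubalgebra_toSubmodule R H' I, hI]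
    apply Submodule.map_injective_of_injective H'.toSubmodule.injective_subtype
    simp only [coe_ofLe, Submodule.map_sup, Submodule.map_subtype_range_inclusion,
      Submodule.map_top, Submodule.range_subtype]
    rw [Submodule.map_subtype_span_singleton]
    exact hH'.symm
  let e : H ≃ₗ⁅R⁆ I :=
    (equivOfLe hHH').trans (LieEquiv.ofEq _ _ ((coe_set_eq _ _).mpr hI.symm))
  let : LieRingModule H M := LieRingModule.compLieHom M e.toLieHom
  have : LieModule R H M := LieModule.compLieHom M e.toLieHom
  have hHM : LieModule.IsNilpotent H M := hH M fun y hy => hM _ hy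
  have hIM : LieModule.IsNilpotent I M :=
    e.surjective.lieModuleIsNilpotent (g := LinearMap.id) (fun _ _ => rfl) Function.surjective_id
  exact LieSubmodule.isNilpotentOfIsNilpotentSpanSupEqTop hxI (hM _ hxS) hIM

end LieSubalgebra

open DirectSum SetLike

theorem Submodule.isInternal_comap_subtype {R M ι : Type*} [Ring R] [AddCommGroup M] [Module R M]
    [DecidableEq ι] {A : ι → Submodule R M} {p : Submodule R M} (hA : iSupIndep A)
    (hp : ⨆ i, A i = p) :
    DirectSum.IsInternal fun i => (A i).comap p.subtype := by
  have hAp : ∀ i, A i ≤ p := fun i => hp ▸ le_iSup A i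
  apply DirectSum.isInternal_submodule_of_iSupIndep_of_iSup_eq_top
  · apply (iSupIndep_map_orderIso_iff (Submodule.mapIic p)).mp
    apply iSupIndep.of_coe_Iic_comp
    convert hA using 1
    ext1 i
    simpa using hAp i
  · apply Submodule.map_injective_of_injective p.subtype_injective
    simpa [Submodule.map_iSup, hAp] using hp

section Graded

variable {R : Type u} {L : Type v} [CommRing R] [LieRing L] [LieAlgebra R L]
variable {ι : Type*} [DecidableEq ι] [AddCommGroup ι]
variable (C : ι → Submodule R L) [GradedLieAlgebra C]

theorem coe_decompose_lie_add_of_left_mem {a : L} {i : ι} (ha : a ∈ C i) (x : L) (j : ι) :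
    (decompose C ⁅a, x⁆ (i + j) : L) = ⁅a, (decompose C x j : L)⁆ := by
  induction x using DirectSum.Decomposition.inductionOn C with
  | zero => simp
  | @homogeneous k x =>
    have hax : ⁅a, (x : L)⁆ ∈ C (i + k) := GradedBracket.bracket_mem ha x.2
    by_cases hkj : k = j
    · subst hkj
      rw [decompose_of_mem_same C hax, decompose_of_mem_same C x.2]
    · rw [decompose_of_mem_ne C hax (by simpa using hkj), decompose_of_mem_ne C x.2 hkj,
        lie_zero]
  | add x y hx hy =>
    simp only [lie_add, decompose_add, DirectSum.add_apply, Submodule.coe_add, hx, hy]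

theorem LieSubalgebra.isHomogeneous_normalizer {H : LieSubalgebra R L}
    (hH : SetLike.IsHomogeneous C H) : SetLike.IsHomogeneous C H.normalizer := by
  classical
  intro j x hx
  rw [LieSubalgebra.mem_normalizer_iff'] at hx ⊢
  intro y hy
  rw [← sum_support_decompose C y, sum_lie]
  refine sum_mem fun i _ => ?_
  rw [← coe_decompose_lie_add_of_left_mem C (decompose C y i).2]
  exact hH _ (hx _ (hH i hy))

theorem Submodule.isHomogeneous_span_singleton_sup {p : Submodule R L}
    (hp : SetLike.IsHomogeneous C p) {a : L} (ha : IsHomogeneousElem C a) :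
    SetLike.IsHomogeneous C ((R ∙ a) ⊔ p : Submodule R L) := by
  obtain ⟨i, hi⟩ := ha
  intro j x hx
  obtain ⟨s, hs, y, hy, rfl⟩ := Submodule.mem_sup.mp hx
  obtain ⟨t, rfl⟩ := Submodule.mem_span_singleton.mp hs
  rw [decompose_add, decompose_smul, DirectSum.add_apply, Submodule.coe_add, DirectSum.smul_apply,
    Submodule.coe_smul]
  refine add_mem (Submodule.mem_sup_left (Submodule.smul_mem _ _ ?_))
    (Submodule.mem_sup_right (hp j hy))
  by_cases hij : i = j
  · subst hij
    rw [decompose_of_mem_same C hi]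
    exact Submodule.mem_span_singleton_self a
  · rw [decompose_of_mem_ne C hi hij]
    exact zero_mem _

variable {C}

theorem LieSubalgebra.exists_isHomogeneousElem_mem_normalizer_notMem
    (hnil : ∀ x, IsHomogeneousElem C x → IsNilpotent (LieAlgebra.ad R L x))
    {H : LieSubalgebra R L} (hH : SetLike.IsHomogeneous C H)
    (hE : H.IsEngelianOn {x | IsHomogeneousElem C x}) (hne : H ≠ ⊤) :
    ∃ a, IsHomogeneousElem C a ∧ a ∈ H.normalizer ∧ a ∉ H := by
  have : Nontrivial (L ⧸ H.toLieSubmodule) :=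
    Submodule.Quotient.nontrivial_iff.2 (by simpa using hne)
  have : LieModule.IsNilpotent H (L ⧸ H.toLieSubmodule) := by
    refine hE _ fun x hx => Module.End.IsNilpotent.mapQ (fun y hy => ?_) (hnil x hx)
    exact H.lie_mem x.2 hy
  have hlt : H < H.normalizer := by
    refine lt_of_le_of_ne H.le_normalizer ?_
    rw [Ne, eq_comm, H.normalizer_eq_self_iff, ← Ne, ← LieSubmodule.nontrivial_iff_ne_bot R H]
    exact nontrivial_max_triv_of_isNilpotent R H _
  obtain ⟨x, hxN, hxH⟩ := SetLike.exists_of_lt hlt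
  obtain ⟨i, hi⟩ : ∃ i, (decompose C x i : L) ∉ H := by
    by_contra! h
    exact hxH ((AddSubmonoidClass.IsHomogeneous.mem_iff C H hH).2 h)
  exact ⟨_, ⟨i, (decompose C x i).2⟩, isHomogeneous_normalizer C hH i hxN, hi⟩

theorem LieSubalgebra.exists_gt_isHomogeneous_isEngelianOn
    (hnil : ∀ x, IsHomogeneousElem C x → IsNilpotent (LieAlgebra.ad R L x))
    {H : LieSubalgebra R L} (hH : SetLike.IsHomogeneous C H)
    (hE : H.IsEngelianOn {x | IsHomogeneousElem C x}) (hne : H ≠ ⊤) :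
    ∃ H' : LieSubalgebra R L, H < H' ∧ SetLike.IsHomogeneous C H' ∧
      H'.IsEngelianOn {x | IsHomogeneousElem C x} := by
  obtain ⟨a, ha, haN, haH⟩ := exists_isHomogeneousElem_mem_normalizer_notMem hnil hH hE hne
  let H' : LieSubalgebra R L :=
    { (R ∙ a) ⊔ H.toSubmodule with
      lie_mem' := fun hy hz => lie_mem_sup_of_mem_normalizer haN hy hz }
  have hHH' : H < H' := by
    refine lt_of_le_not_ge ((toSubmodule_le_toSubmodule _ _).mp le_sup_right) fun h => haH ?_
    exact h (Submodule.mem_sup_left (Submodule.mem_span_singleton_self a))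
  exact ⟨H', hHH', Submodule.isHomogeneous_span_singleton_sup C hH ha,
    hE.of_toSubmodule_eq_span_singleton_sup haN ha rfl⟩

theorem LieAlgebra.isNilpotent_of_isNilpotent_ad_of_isHomogeneousElem [IsNoetherian R L]
    (hnil : ∀ x, IsHomogeneousElem C x → IsNilpotent (LieAlgebra.ad R L x)) :
    LieModule.IsNilpotent L L := by
  let s := {H : LieSubalgebra R L |
    SetLike.IsHomogeneous C H ∧ H.IsEngelianOn {x | IsHomogeneousElem C x}}
  have hbot : ⊥ ∈ s := by
    refine ⟨fun i x hx => ?_, LieSubalgebra.isEngelianOn_bot _⟩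
    rw [LieSubalgebra.mem_bot] at hx
    simp [hx]
  obtain ⟨H, ⟨hH, hE⟩, hmax⟩ :=
    (LieSubalgebra.wellFoundedGT_of_noetherian R L).wf.has_min s ⟨⊥, hbot⟩
  obtain rfl : H = ⊤ := by
    by_contra hne
    obtain ⟨H', hlt, hH'⟩ := H.exists_gt_isHomogeneous_isEngelianOn hnil hH hE hne
    exact hmax H' hH' hlt
  rw [← isNilpotent_of_top_iff (R := R)]
  exact hE L fun x => hnil x

end Graded

theorem graded_homogeneous_ad_nilpotent_isSolvable_general
    {V : Type*} [AddCommGroup V] [Module ℂ V] [FiniteDimensional ℂ V]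
    {Γ : Type*} [AddCommGroup Γ]
    (L : LieSubalgebra ℂ (Module.End ℂ V))
    (Lc : Γ → Submodule ℂ (Module.End ℂ V))
    (hindep : iSupIndep Lc)
    (hsup : (⨆ γ, Lc γ) = L.toSubmodule)
    (hgrad : ∀ γ δ : Γ, ∀ x ∈ Lc γ, ∀ y ∈ Lc δ, ⁅x, y⁆ ∈ Lc (γ + δ))
    (hnil : ∀ γ : Γ, ∀ a : Module.End ℂ V, ∀ haL : a ∈ L,
      a ∈ Lc γ → IsNilpotent (LieAlgebra.ad ℂ L ⟨a, haL⟩)) :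
    LieAlgebra.IsSolvable L := by
  classical
  let C : Γ → Submodule ℂ L := fun γ => (Lc γ).comap L.toSubmodule.subtype
  let _ : GradedLieAlgebra C :=
    { (Submodule.isInternal_comap_subtype hindep hsup).chooseDecomposition with
      bracket_mem := fun γ δ _ _ hx hy => hgrad γ δ _ hx _ hy }
  have : LieModule.IsNilpotent L L :=
    LieAlgebra.isNilpotent_of_isNilpotent_ad_of_isHomogeneousElem (C := C)
      fun x ⟨γ, hx⟩ => hnil γ x x.2 hx
  infer_instance

/-- Let `L` be a `Γ`-graded finite-dimensional complex Lie algebra of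
operators on a finite-dimensional space, graded by a finite abelian group `Γ`. If every
homogeneous element `a` (i.e. `a ∈ L_γ` for some `γ`) has `ad a` nilpotent on `L`,
then `L` is solvable. -/
theorem graded_homogeneous_ad_nilpotent_isSolvable
    {V : Type*} [AddCommGroup V] [Module ℂ V] [FiniteDimensional ℂ V]
    {Γ : Type*} [AddCommGroup Γ] [Fintype Γ]
    (L : LieSubalgebra ℂ (Module.End ℂ V))
    (Lc : Γ → Submodule ℂ (Module.End ℂ V))
    (hle : ∀ γ, Lc γ ≤ L.toSubmodule)
    (hindep : iSupIndep Lc)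
    (hsup : (⨆ γ, Lc γ) = L.toSubmodule)
    (hgrad : ∀ γ δ : Γ, ∀ x ∈ Lc γ, ∀ y ∈ Lc δ, ⁅x, y⁆ ∈ Lc (γ + δ))
    (hnil : ∀ γ : Γ, ∀ a : Module.End ℂ V, ∀ haL : a ∈ L,
      a ∈ Lc γ → IsNilpotent (LieAlgebra.ad ℂ L ⟨a, haL⟩)) :
    LieAlgebra.IsSolvable L :=
  graded_homogeneous_ad_nilpotent_isSolvable_general L Lc hindep hsup hgrad hnil
end

section
/- Let J be a Jordan subalgebra of an associative algebra A and I a Jordan ideal of J (i.e., J∘I ⊆ I, where x∘y = xy+yx). Define ℒ(J,I) = I + [J,I], ℒ(I) = I + [I,I], ℒ(J) = J + [J,J] (spans of commutators). Then ℒ(J,I) is a Lie subalgebra, ℒ(I) is a Lie ideal of ℒ(J,I), and ℒ(J,I) is a Lie ideal of ℒ(J). -/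
/-- The span of all commutators `⁅u, v⁆` with `u ∈ U`, `v ∈ V`. -/
def commutatorSpan {A : Type*} [Ring A] [Algebra ℂ A]
    (U V : Submodule ℂ A) : Submodule ℂ A :=
  Submodule.span ℂ {z : A | ∃ u ∈ U, ∃ v ∈ V, z = ⁅u, v⁆}

/-!
The identity `⁅a, ⁅b, c⁆⁆ = (a ∘ b) ∘ c - b ∘ (a ∘ c)` gives `⁅J, ⁅J, I⁆⁆ ⊆ I`, and the Jacobi
identity turns this into `⁅⁅J, J⁆, I⁆ ⊆ I`. Expanding a bracket of two of the spaces
`ℒ(J, I) = I + ⁅J, I⁆`, `ℒ(I)`, `ℒ(J)`, and a bracket of two commutators once more by the Jacobi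
identity, every term lands in `I` or in the required commutator span by these two inclusions.
-/
open Submodule

section

attribute [local instance] LieRing.ofAssociativeRing

variable {A : Type*} [Ring A]

theorem lie_lie_eq_jordan (a b c : A) :
    ⁅a, ⁅b, c⁆⁆ = ((a * b + b * a) * c + c * (a * b + b * a)) -
      (b * (a * c + c * a) + (a * c + c * a) * b) := by
  simp only [Ring.lie_def]
  noncomm_ring

variable [Algebra ℂ A]

theorem commutatorSpan_eq_map₂ (U V : Submodule ℂ A) :
    commutatorSpan U V = map₂ (LinearMap.mul ℂ A - (LinearMap.mul ℂ A).flip) U V := by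
  rw [map₂_eq_span_image2, commutatorSpan]
  congr 1
  ext z
  simp [Ring.lie_def, eq_comm]

theorem commutatorSpan_le_iff {U V P : Submodule ℂ A} :
    commutatorSpan U V ≤ P ↔ ∀ u ∈ U, ∀ v ∈ V, ⁅u, v⁆ ∈ P := by
  simp [commutatorSpan_eq_map₂, map₂_le, Ring.lie_def]

theorem lie_mem_commutatorSpan {U V : Submodule ℂ A} {u v : A} (hu : u ∈ U) (hv : v ∈ V) :
    ⁅u, v⁆ ∈ commutatorSpan U V :=
  commutatorSpan_le_iff.1 le_rfl u hu v hv

theorem commutatorSpan_mono {U₁ U₂ V₁ V₂ : Submodule ℂ A} (hU : U₁ ≤ U₂) (hV : V₁ ≤ V₂) :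
    commutatorSpan U₁ V₁ ≤ commutatorSpan U₂ V₂ := by
  simpa only [commutatorSpan_eq_map₂] using map₂_le_map₂ hU hV

theorem commutatorSpan_sup_left (U₁ U₂ V : Submodule ℂ A) :
    commutatorSpan (U₁ ⊔ U₂) V = commutatorSpan U₁ V ⊔ commutatorSpan U₂ V := by
  simp only [commutatorSpan_eq_map₂, map₂_sup_left]

theorem commutatorSpan_sup_right (U V₁ V₂ : Submodule ℂ A) :
    commutatorSpan U (V₁ ⊔ V₂) = commutatorSpan U V₁ ⊔ commutatorSpan U V₂ := by
  simp only [commutatorSpan_eq_map₂, map₂_sup_right]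

theorem commutatorSpan_sup_sup_le {U₁ U₂ V₁ V₂ P : Submodule ℂ A}
    (h₁₁ : commutatorSpan U₁ V₁ ≤ P) (h₁₂ : commutatorSpan U₁ V₂ ≤ P)
    (h₂₁ : commutatorSpan U₂ V₁ ≤ P) (h₂₂ : commutatorSpan U₂ V₂ ≤ P) :
    commutatorSpan (U₁ ⊔ U₂) (V₁ ⊔ V₂) ≤ P := by
  rw [commutatorSpan_sup_left, commutatorSpan_sup_right, commutatorSpan_sup_right]
  exact sup_le (sup_le h₁₁ h₁₂) (sup_le h₂₁ h₂₂)

theorem commutatorSpan_comm (U V : Submodule ℂ A) :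
    commutatorSpan U V = commutatorSpan V U := by
  have key : ∀ U V : Submodule ℂ A, commutatorSpan U V ≤ commutatorSpan V U :=
    fun U V => commutatorSpan_le_iff.2 fun u hu v hv => by
      rw [← lie_skew]
      exact neg_mem (lie_mem_commutatorSpan hv hu)
  exact le_antisymm (key U V) (key V U)

theorem commutatorSpan_commutatorSpan_le_iff {M N P Q : Submodule ℂ A} :
    commutatorSpan M (commutatorSpan N P) ≤ Q ↔
      ∀ m ∈ M, ∀ n ∈ N, ∀ p ∈ P, ⁅m, ⁅n, p⁆⁆ ∈ Q := by
  conv_lhs => rw [commutatorSpan_eq_map₂, commutatorSpan, ← span_eq M, map₂_span_span, span_le]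
  rw [Set.image2_subset_iff]
  refine ⟨fun h m hm n hn p hp => h m hm _ ⟨n, hn, p, hp, rfl⟩, ?_⟩
  rintro h m hm _ ⟨n, hn, p, hp, rfl⟩
  exact h m hm n hn p hp

theorem commutatorSpan_commutatorSpan_left_le (M N P : Submodule ℂ A) :
    commutatorSpan (commutatorSpan M N) P ≤
      commutatorSpan M (commutatorSpan N P) ⊔ commutatorSpan N (commutatorSpan M P) := by
  rw [commutatorSpan_comm, commutatorSpan_commutatorSpan_le_iff]
  intro p hp m hm n hn
  have hjacobi : ⁅p, ⁅m, n⁆⁆ = ⁅n, ⁅m, p⁆⁆ - ⁅m, ⁅n, p⁆⁆ := by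
    rw [← lie_skew, lie_lie, neg_sub]
  rw [hjacobi]
  exact sub_mem (mem_sup_right (lie_mem_commutatorSpan hn (lie_mem_commutatorSpan hm hp)))
    (mem_sup_left (lie_mem_commutatorSpan hm (lie_mem_commutatorSpan hn hp)))

/-- `ℒ(J, I)` in the notation of the paper. -/
def supCommutatorSpan (J I : Submodule ℂ A) : Submodule ℂ A :=
  I ⊔ commutatorSpan J I

theorem supCommutatorSpan_mono {J₁ J₂ I₁ I₂ : Submodule ℂ A} (hJ : J₁ ≤ J₂) (hI : I₁ ≤ I₂) :
    supCommutatorSpan J₁ I₁ ≤ supCommutatorSpan J₂ I₂ :=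
  sup_le_sup hI (commutatorSpan_mono hJ hI)

section JordanIdeal

variable {J I : Submodule ℂ A}
    (hJordan : ∀ a ∈ J, ∀ b ∈ J, a * b + b * a ∈ J)
    (hIdeal : ∀ a ∈ J, ∀ b ∈ I, a * b + b * a ∈ I)
include hJordan hIdeal

theorem commutatorSpan_commutatorSpan_le_of_jordan :
    commutatorSpan J (commutatorSpan J I) ≤ I := by
  rw [commutatorSpan_commutatorSpan_le_iff]
  intro a ha b hb c hc
  rw [lie_lie_eq_jordan]
  exact sub_mem (hIdeal _ (hJordan a ha b hb) c hc) (hIdeal b hb _ (hIdeal a ha c hc))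

theorem commutatorSpan_commutatorSpan_left_le_of_jordan :
    commutatorSpan (commutatorSpan J J) I ≤ I :=
  have hJJI := commutatorSpan_commutatorSpan_le_of_jordan hJordan hIdeal
  (commutatorSpan_commutatorSpan_left_le J J I).trans (sup_le hJJI hJJI)

theorem commutatorSpan_supCommutatorSpan_le (hIJ : I ≤ J) :
    commutatorSpan (supCommutatorSpan J I) (supCommutatorSpan J I) ≤ supCommutatorSpan J I := by
  have hJJI := commutatorSpan_commutatorSpan_le_of_jordan hJordan hIdeal
  have hII : commutatorSpan I I ≤ commutatorSpan J I := commutatorSpan_mono hIJ le_rfl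
  have hIJI : commutatorSpan I (commutatorSpan J I) ≤ I :=
    (commutatorSpan_mono hIJ le_rfl).trans hJJI
  have hJIJI : commutatorSpan (commutatorSpan J I) (commutatorSpan J I) ≤ commutatorSpan J I :=
    (commutatorSpan_commutatorSpan_left_le J I _).trans
      (sup_le (commutatorSpan_mono le_rfl hIJI) ((commutatorSpan_mono le_rfl hJJI).trans hII))
  exact commutatorSpan_sup_sup_le (le_sup_of_le_right hII) (le_sup_of_le_left hIJI)
    (le_sup_of_le_left ((commutatorSpan_comm _ I).le.trans hIJI)) (le_sup_of_le_right hJIJI)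

theorem commutatorSpan_supCommutatorSpan_supCommutatorSpan_self_le (hIJ : I ≤ J) :
    commutatorSpan (supCommutatorSpan J I) (supCommutatorSpan I I) ≤ supCommutatorSpan I I := by
  have hIJI : commutatorSpan I (commutatorSpan J I) ≤ I :=
    (commutatorSpan_mono hIJ le_rfl).trans
      (commutatorSpan_commutatorSpan_le_of_jordan hJordan hIdeal)
  have hIII : commutatorSpan I (commutatorSpan I I) ≤ I :=
    (commutatorSpan_mono le_rfl (commutatorSpan_mono hIJ le_rfl)).trans hIJI
  have hJIII : commutatorSpan (commutatorSpan J I) (commutatorSpan I I) ≤ commutatorSpan I I := by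
    rw [commutatorSpan_comm]
    exact (commutatorSpan_commutatorSpan_left_le I I _).trans
      (sup_le (commutatorSpan_mono le_rfl hIJI) (commutatorSpan_mono le_rfl hIJI))
  exact commutatorSpan_sup_sup_le le_sup_right (le_sup_of_le_left hIII)
    (le_sup_of_le_left ((commutatorSpan_comm _ I).le.trans hIJI)) (le_sup_of_le_right hJIII)

theorem commutatorSpan_supCommutatorSpan_self_supCommutatorSpan_le :
    commutatorSpan (supCommutatorSpan J J) (supCommutatorSpan J I) ≤ supCommutatorSpan J I := by
  have hJJI := commutatorSpan_commutatorSpan_le_of_jordan hJordan hIdeal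
  have hJJJI : commutatorSpan J (commutatorSpan J (commutatorSpan J I)) ≤ commutatorSpan J I :=
    commutatorSpan_mono le_rfl hJJI
  exact commutatorSpan_sup_sup_le le_sup_right (le_sup_of_le_left hJJI)
    (le_sup_of_le_left (commutatorSpan_commutatorSpan_left_le_of_jordan hJordan hIdeal))
    (le_sup_of_le_right ((commutatorSpan_commutatorSpan_left_le J J _).trans (sup_le hJJJI hJJJI)))

end JordanIdeal

end

/-- Let `J` be a Jordan subalgebra of an associative algebra `A` and `I`
a Jordan ideal of `J`. Define `ℒ(J,I) = I + [J,I]`, `ℒ(I) = I + [I,I]`, `ℒ(J) = J + [J,J]`.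
Then `ℒ(J,I)` is a Lie subalgebra, `ℒ(I)` is a Lie ideal of `ℒ(J,I)`, and `ℒ(J,I)` is a Lie
ideal of `ℒ(J)`. -/
theorem jordan_ideal_lie_ideal_series
    {A : Type*} [Ring A] [Algebra ℂ A]
    (J I : Submodule ℂ A)
    (hIJ : I ≤ J)
    (hJordan : ∀ a ∈ J, ∀ b ∈ J, a * b + b * a ∈ J)
    (hIdeal : ∀ a ∈ J, ∀ b ∈ I, a * b + b * a ∈ I) :
    (I ⊔ commutatorSpan I I) ≤ (I ⊔ commutatorSpan J I) ∧
    (I ⊔ commutatorSpan J I) ≤ (J ⊔ commutatorSpan J J) ∧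
    (∀ x ∈ I ⊔ commutatorSpan J I, ∀ y ∈ I ⊔ commutatorSpan J I,
        ⁅x, y⁆ ∈ I ⊔ commutatorSpan J I) ∧
    (∀ x ∈ I ⊔ commutatorSpan J I, ∀ y ∈ I ⊔ commutatorSpan I I,
        ⁅x, y⁆ ∈ I ⊔ commutatorSpan I I) ∧
    (∀ x ∈ J ⊔ commutatorSpan J J, ∀ y ∈ I ⊔ commutatorSpan J I,
        ⁅x, y⁆ ∈ I ⊔ commutatorSpan J I) :=
  ⟨supCommutatorSpan_mono hIJ le_rfl, supCommutatorSpan_mono le_rfl hIJ,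
    commutatorSpan_le_iff.1 (commutatorSpan_supCommutatorSpan_le hJordan hIdeal hIJ),
    commutatorSpan_le_iff.1
      (commutatorSpan_supCommutatorSpan_supCommutatorSpan_self_le hJordan hIdeal hIJ),
    commutatorSpan_le_iff.1
      (commutatorSpan_supCommutatorSpan_self_supCommutatorSpan_le hJordan hIdeal)⟩
end

section
/- Let L = L₀ ⊕ L₁ be a ℤ₂-graded Lie algebra of operators on a finite-dimensional complex space where L₀ = span[L₁,L₁] and every element of L₁ is nilpotent. Then tr(xy) = 0 for all x, y ∈ L₀. -/
/-!
For `a, b ∈ L₁` and `y ∈ L₀`, invariance of the trace form gives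
`tr(⁅a, b⁆ y) = tr(a ⁅b, y⁆)` with `⁅b, y⁆ ∈ L₁`. The trace form vanishes on `L₁`:
every element of `L₁` is nilpotent, so `tr(a²) = 0` for `a ∈ L₁`, and polarizing
(`a + c ∈ L₁`, `2 ≠ 0`) gives `tr(ac) = 0`. Linearity in the first slot extends this
from the brackets `⁅a, b⁆` to their span `L₀`.
-/

namespace LinearMap

variable {K M : Type*} [Field K] [AddCommGroup M] [Module K M]

theorem trace_mul_self_eq_zero_of_isNilpotent {R : Type*} [CommRing R] [IsReduced R]
    [Module R M] {f : Module.End R M} (hf : IsNilpotent f) :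
    trace R M (f * f) = 0 :=
  (isNilpotent_trace_of_isNilpotent ((Commute.refl f).isNilpotent_mul_left hf)).eq_zero

theorem trace_mul_eq_zero_of_isNilpotent_add [NeZero (2 : K)] {a c : Module.End K M}
    (ha : IsNilpotent a) (hc : IsNilpotent c) (hac : IsNilpotent (a + c)) :
    trace K M (a * c) = 0 := by
  have hpolar : trace K M ((a + c) * (a + c)) =
      trace K M (a * a) + 2 * trace K M (a * c) + trace K M (c * c) := by
    simp only [add_mul, mul_add, map_add, trace_mul_comm K c a]
    ring
  rw [trace_mul_self_eq_zero_of_isNilpotent ha, trace_mul_self_eq_zero_of_isNilpotent hc,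
    trace_mul_self_eq_zero_of_isNilpotent hac] at hpolar
  simpa [two_ne_zero] using hpolar.symm

theorem trace_mul_eq_zero_of_mem_span_lie [NeZero (2 : K)] {L₁ : Submodule K (Module.End K M)}
    (hnil : ∀ a ∈ L₁, IsNilpotent a) {y : Module.End K M} (hy : ∀ b ∈ L₁, ⁅b, y⁆ ∈ L₁)
    {x : Module.End K M} (hx : x ∈ Submodule.span K {z | ∃ a ∈ L₁, ∃ b ∈ L₁, z = ⁅a, b⁆}) :
    trace K M (x * y) = 0 := by
  suffices hspan : Submodule.span K {z | ∃ a ∈ L₁, ∃ b ∈ L₁, z = ⁅a, b⁆} ≤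
      ker ((trace K M).comp (mulRight K y)) from hspan hx
  rw [Submodule.span_le]
  rintro _ ⟨a, ha, b, hb, rfl⟩
  change trace K M (⁅a, b⁆ * y) = 0
  rw [trace_lie_mul_eq]
  exact trace_mul_eq_zero_of_isNilpotent_add (hnil a ha) (hnil _ (hy b hb))
    (hnil _ (L₁.add_mem ha (hy b hb)))

end LinearMap

theorem trace_zero_component_of_z2_graded_nilpotent_odd_part_general
    {V : Type*} [AddCommGroup V] [Module ℂ V]
    (L₀ L₁ : Submodule ℂ (Module.End ℂ V))
    (hL₀ : L₀ = Submodule.span ℂ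
      {z : Module.End ℂ V | ∃ a ∈ L₁, ∃ b ∈ L₁, z = ⁅a, b⁆})
    (hgrad01 : ∀ x ∈ L₀, ∀ y ∈ L₁, ⁅x, y⁆ ∈ L₁)
    (hnil : ∀ a ∈ L₁, IsNilpotent a) :
    ∀ x ∈ L₀, ∀ y ∈ L₀, LinearMap.trace ℂ V (x * y) = 0 := by
  intro x hx y hy
  have hy₁ : ∀ b ∈ L₁, ⁅b, y⁆ ∈ L₁ := fun b hb => by
    simpa only [Ring.lie_def, neg_sub] using L₁.neg_mem (hgrad01 y hy b hb)
  rw [hL₀] at hx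
  exact LinearMap.trace_mul_eq_zero_of_mem_span_lie hnil hy₁ hx

/-- Let `L = L₀ ⊕ L₁` be a `ℤ₂`-graded Lie algebra of operators on a
finite-dimensional complex space where `L₀ = span [L₁, L₁]` and every element of `L₁` is
nilpotent. Then `tr(xy) = 0` for all `x, y ∈ L₀`. -/
theorem trace_zero_component_of_z2_graded_nilpotent_odd_part
    {V : Type*} [AddCommGroup V] [Module ℂ V] [FiniteDimensional ℂ V]
    (L₀ L₁ : Submodule ℂ (Module.End ℂ V))
    (hdisj : Disjoint L₀ L₁)
    (hL₀ : L₀ = Submodule.span ℂ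
      {z : Module.End ℂ V | ∃ a ∈ L₁, ∃ b ∈ L₁, z = ⁅a, b⁆})
    (hgrad01 : ∀ x ∈ L₀, ∀ y ∈ L₁, ⁅x, y⁆ ∈ L₁)
    (hgrad00 : ∀ x ∈ L₀, ∀ y ∈ L₀, ⁅x, y⁆ ∈ L₀)
    (hnil : ∀ a ∈ L₁, IsNilpotent a) :
    ∀ x ∈ L₀, ∀ y ∈ L₀, LinearMap.trace ℂ V (x * y) = 0 :=
  trace_zero_component_of_z2_graded_nilpotent_odd_part_general L₀ L₁ hL₀ hgrad01 hnil
end
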